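/- arXiv:2103.16850 — 9 statements merged into one kernel-verified Lean document; each statement's English description precedes it below -/
import Mathlib

section
/- For every integer p ≥ 3, the fixed points in [0,1] of the map g_p(x) = 1 - (1 - x^{p-1})^{p-1} are exactly 0, 1, and α_p, where α_p is the unique root of x^{p-1}+x-1=0 in [0,1]. -/
/-!
With `n = p - 1`, the fixed points are the zeros of `h(t) = 1 - t - (1 - t ^ n) ^ n`, and
`0`, `1`, `α` are zeros. A fourth zero in `(0, 1)` would give, by Rolle, three critical points
`0 < x < y < z < 1`. Since `h'(t) = n² (t - t ^ (n + 1)) ^ (n - 1) - 1`, the strictly concave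
function `t - t ^ (n + 1)` would take the same value at `x`, `y` and `z`, which is impossible.
-/

open Set

theorem StrictConcaveOn.lt_of_eq_of_lt_of_lt {s : Set ℝ} {f : ℝ → ℝ}
    (hf : StrictConcaveOn ℝ s f) {x y z : ℝ} (hx : x ∈ s) (hz : z ∈ s) (hxy : x < y)
    (hyz : y < z) (hfxz : f x = f z) :
    f x < f y := by
  have hy : y ∈ openSegment ℝ x z := by
    rw [openSegment_eq_Ioo (hxy.trans hyz)]; exact ⟨hxy, hyz⟩
  simpa [hfxz] using hf.lt_on_openSegment hx hz (hxy.trans hyz).ne hy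

theorem exists_deriv_eq_zero_of_four_eq {f : ℝ → ℝ} (hf : Continuous f) {a b c d : ℝ}
    (hab : a < b) (hbc : b < c) (hcd : c < d) (hfab : f a = f b) (hfbc : f b = f c)
    (hfcd : f c = f d) :
    ∃ x ∈ Ioo a b, ∃ y ∈ Ioo b c, ∃ z ∈ Ioo c d,
      deriv f x = 0 ∧ deriv f y = 0 ∧ deriv f z = 0 := by
  obtain ⟨x, hx, hfx⟩ := exists_deriv_eq_zero hab hf.continuousOn hfab
  obtain ⟨y, hy, hfy⟩ := exists_deriv_eq_zero hbc hf.continuousOn hfbc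
  obtain ⟨z, hz, hfz⟩ := exists_deriv_eq_zero hcd hf.continuousOn hfcd
  exact ⟨x, hx, y, hy, z, hz, hfx, hfy, hfz⟩

theorem strictConcaveOn_sub_pow_succ {n : ℕ} (hn : n ≠ 0) :
    StrictConcaveOn ℝ (Ici 0) fun t : ℝ => t - t ^ (n + 1) :=
  (concaveOn_id (convex_Ici 0)).sub_strictConvexOn (strictConvexOn_pow (by omega))

/-- `fixedPointDefect (p - 1)` is the paper's `h_p`. -/
def fixedPointDefect (n : ℕ) (t : ℝ) : ℝ := 1 - t - (1 - t ^ n) ^ n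

namespace fixedPointDefect

theorem apply_zero {n : ℕ} (hn : n ≠ 0) : fixedPointDefect n 0 = 0 := by
  simp [fixedPointDefect, zero_pow hn]

theorem apply_one {n : ℕ} (hn : n ≠ 0) : fixedPointDefect n 1 = 0 := by
  simp [fixedPointDefect, zero_pow hn]

theorem continuous (n : ℕ) : Continuous (fixedPointDefect n) := by
  unfold fixedPointDefect; fun_prop

theorem hasDerivAt (n : ℕ) (t : ℝ) :
    HasDerivAt (fixedPointDefect n) ((n : ℝ) ^ 2 * (t - t ^ (n + 1)) ^ (n - 1) - 1) t := by
  have h := ((hasDerivAt_id t).const_sub 1).sub (((hasDerivAt_pow n t).const_sub 1).pow n)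
  refine h.congr_deriv ?_
  rw [show t - t ^ (n + 1) = t * (1 - t ^ n) by ring, mul_pow]
  ring

theorem sub_pow_succ_eq_of_deriv_eq_zero {n : ℕ} (hn : 2 ≤ n) {c c' : ℝ}
    (hc : c ∈ Icc 0 1) (hc' : c' ∈ Icc 0 1)
    (hdc : deriv (fixedPointDefect n) c = 0) (hdc' : deriv (fixedPointDefect n) c' = 0) :
    c - c ^ (n + 1) = c' - c' ^ (n + 1) := by
  have nonneg : ∀ t ∈ Icc (0 : ℝ) 1, 0 ≤ t - t ^ (n + 1) := fun t ht =>
    sub_nonneg.mpr (pow_le_of_le_one ht.1 ht.2 n.succ_ne_zero)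
  rw [(hasDerivAt n c).deriv] at hdc
  rw [(hasDerivAt n c').deriv] at hdc'
  refine (pow_left_inj₀ (nonneg c hc) (nonneg c' hc') (by omega : n - 1 ≠ 0)).mp ?_
  have hn0 : (n : ℝ) ^ 2 ≠ 0 := by positivity
  exact mul_left_cancel₀ hn0 (by linarith)

theorem eq_of_apply_eq_zero {n : ℕ} (hn : 2 ≤ n) {a b : ℝ}
    (ha : a ∈ Ioo 0 1) (hb : b ∈ Ioo 0 1) (hfa : fixedPointDefect n a = 0)
    (hfb : fixedPointDefect n b = 0) : a = b := by
  wlog hab : a ≤ b generalizing a b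
  · exact (this hb ha hfb hfa (le_of_not_ge hab)).symm
  by_contra hne
  obtain ⟨x, hx, y, hy, z, hz, hdx, hdy, hdz⟩ :=
    exists_deriv_eq_zero_of_four_eq (continuous n) ha.1 (lt_of_le_of_ne hab hne) hb.2
      ((apply_zero (by omega)).trans hfa.symm) (hfa.trans hfb.symm)
      (hfb.trans (apply_one (by omega)).symm)
  have hx01 : x ∈ Icc (0 : ℝ) 1 := ⟨hx.1.le, by linarith [hx.2, hab, hb.2]⟩
  have hy01 : y ∈ Icc (0 : ℝ) 1 := ⟨by linarith [hy.1, ha.1], by linarith [hy.2, hb.2]⟩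
  have hz01 : z ∈ Icc (0 : ℝ) 1 := ⟨by linarith [hz.1, hb.1], hz.2.le⟩
  have hxy := sub_pow_succ_eq_of_deriv_eq_zero hn hx01 hy01 hdx hdy
  have hxz := sub_pow_succ_eq_of_deriv_eq_zero hn hx01 hz01 hdx hdz
  have := (strictConcaveOn_sub_pow_succ (n := n) (by omega)).lt_of_eq_of_lt_of_lt hx01.1 hz01.1
    (hx.2.trans hy.1) (hy.2.trans hz.1) hxz
  exact this.ne hxy

end fixedPointDefect

theorem stmt_4 (p : ℕ) (hp : 3 ≤ p) (α : ℝ) (hα : α ∈ Set.Icc (0:ℝ) 1)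
    (hroot : α ^ (p - 1) + α - 1 = 0) :
    ∀ x ∈ Set.Icc (0:ℝ) 1,
      (1 - (1 - x ^ (p - 1)) ^ (p - 1) = x ↔ x = 0 ∨ x = 1 ∨ x = α) := by
  have hn : 2 ≤ p - 1 := by omega
  have hαn : α ^ (p - 1) = 1 - α := by linarith
  have hα01 : α ∈ Ioo 0 1 := by
    refine ⟨hα.1.lt_of_ne ?_, hα.2.lt_of_ne ?_⟩ <;> rintro rfl <;>
      simp [show p - 1 ≠ 0 by omega] at hroot
  have hfα : fixedPointDefect (p - 1) α = 0 := by
    rw [fixedPointDefect, hαn, sub_sub_cancel, hαn, sub_self]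
  intro x hx
  rw [← sub_eq_zero, show 1 - (1 - x ^ (p - 1)) ^ (p - 1) - x = fixedPointDefect (p - 1) x by
    unfold fixedPointDefect; ring]
  constructor
  · intro hfx
    by_contra! hne
    exact hne.2.2 (fixedPointDefect.eq_of_apply_eq_zero hn
      ⟨hx.1.lt_of_ne hne.1.symm, hx.2.lt_of_ne hne.2.1⟩ hα01 hfx hfα)
  · rintro (rfl | rfl | rfl)
    · exact fixedPointDefect.apply_zero (by omega)
    · exact fixedPointDefect.apply_one (by omega)
    · exact hfα
end

section
/- For every integer p ≥ 3, the function h_p(x) = 1 - x - (1 - x^{p-1})^{p-1} satisfies h_p(x) < 0 for all x ∈ (0, α_p) and h_p(x) > 0 for all x ∈ (α_p, 1), where α_p is the unique root of x^{p-1}+x-1=0 in [0,1]. -/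
lemma tangent_pow (q : ℕ) (hq : 1 ≤ q) {a b : ℝ} (hb : 0 ≤ b) (hba : b ≤ a) :
    (q : ℝ) * b ^ (q - 1) * (a - b) ≤ a ^ q - b ^ q := by
  rw [← geom_sum₂_mul a b q]
  apply mul_le_mul_of_nonneg_right ?_ (by linarith)
  have : (q : ℝ) * b ^ (q - 1) = ∑ _i ∈ Finset.range q, b ^ (q - 1) := by
    simp [mul_comm]
  rw [this]
  apply Finset.sum_le_sum
  intro i hi
  have hi' : i < q := Finset.mem_range.mp hi
  have h1 : b ^ (q - 1) = b ^ i * b ^ (q - 1 - i) := by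
    rw [← pow_add]; congr 1; omega
  rw [h1]
  apply mul_le_mul_of_nonneg_right (pow_le_pow_left₀ hb hba i) (pow_nonneg hb _)

lemma claim1 (q : ℕ) (hq : 2 ≤ q) (α : ℝ) (hα0 : 0 < α) (hα1 : α < 1)
    (hroot : α ^ q = 1 - α) {u : ℝ} (hu0 : 0 < u) (huα : u < α) :
    1 - u < (1 - u ^ q) ^ q := by
  have hq1 : 1 ≤ q := by omega
  have huq : u ^ q ≤ u ^ 1 := pow_le_pow_of_le_one hu0.le (by linarith) hq1
  have hupos : 0 < u ^ q := pow_pos hu0 q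
  have hsplit : u ^ q = u ^ (q - 1) * u := by
    rw [← pow_succ]; congr 1; omega
  by_cases hcase : (q : ℝ) * u ^ (q - 1) < 1
  · have hb : 1 + (q : ℝ) * (-(u ^ q)) ≤ (1 + -(u ^ q)) ^ q :=
      one_add_mul_le_pow (by nlinarith [hupos]) q
    have hlt : (q : ℝ) * u ^ q < u := by
      rw [hsplit, ← mul_assoc]
      nlinarith [hu0]
    have hb' : 1 - (q : ℝ) * u ^ q ≤ (1 - u ^ q) ^ q := by
      have h : (1:ℝ) + -(u ^ q) = 1 - u ^ q := by ring
      rw [h] at hb; linarith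
    linarith
  · push_neg at hcase
    have hαu : 0 < α - u := by linarith
    have h1 : (q : ℝ) * u ^ (q - 1) * (α - u) ≤ α ^ q - u ^ q :=
      tangent_pow q hq1 hu0.le huα.le
    have h1' : α - u ≤ α ^ q - u ^ q := by nlinarith
    have haα : α ≤ 1 - u ^ q := by
      have : u ^ q < α ^ q := pow_lt_pow_left₀ huα hu0.le (by omega)
      linarith
    have h2 : (q : ℝ) * α ^ (q - 1) * ((1 - u ^ q) - α) ≤ (1 - u ^ q) ^ q - α ^ q :=
      tangent_pow q hq1 hα0.le haα
    have h3 : 1 < (q : ℝ) * α ^ (q - 1) := by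
      have : u ^ (q - 1) < α ^ (q - 1) := pow_lt_pow_left₀ huα hu0.le (by omega)
      have hq0 : (0:ℝ) < q := by positivity
      nlinarith
    have h4 : (1 - u ^ q) - α = α ^ q - u ^ q := by linarith
    rw [h4] at h2
    nlinarith [h1', h2, h3]

theorem stmt_5 (p : ℕ) (hp : 3 ≤ p) (α : ℝ) (hα : α ∈ Set.Ioo (0:ℝ) 1)
    (hroot : α ^ (p - 1) + α - 1 = 0) :
    (∀ x ∈ Set.Ioo (0:ℝ) α, 1 - x - (1 - x ^ (p - 1)) ^ (p - 1) < 0) ∧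
    (∀ x ∈ Set.Ioo α (1:ℝ), 1 - x - (1 - x ^ (p - 1)) ^ (p - 1) > 0) := by
  obtain ⟨hα0, hα1⟩ := hα
  set q := p - 1 with hqdef
  have hq : 2 ≤ q := by omega
  have hq0 : q ≠ 0 := by omega
  have hroot' : α ^ q = 1 - α := by linarith
  constructor
  · intro x hx
    obtain ⟨hx0, hxα⟩ := hx
    have := claim1 q hq α hα0 hα1 hroot' hx0 hxα
    linarith
  · intro x hx
    obtain ⟨hxα, hx1⟩ := hx
    have hx0 : 0 < x := lt_trans hα0 hxα
    set u : ℝ := (1 - x) ^ ((q : ℝ)⁻¹) with hudef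
    have hu0 : 0 < u := Real.rpow_pos_of_pos (by linarith) _
    have huq : u ^ q = 1 - x := Real.rpow_inv_natCast_pow (by linarith) hq0
    have huα : u < α := by
      apply lt_of_pow_lt_pow_left₀ q hα0.le
      rw [huq, hroot']
      exact sub_lt_sub_left hxα 1
    have hc := claim1 q hq α hα0 hα1 hroot' hu0 huα
    rw [huq] at hc
    -- hc : 1 - u < (1 - (1 - x)) ^ q, i.e. x ^ q > 1 - u
    have hc' : 1 - u < x ^ q := by
      have : (1 : ℝ) - (1 - x) = x := by ring
      rwa [this] at hc
    have hxq1 : x ^ q < 1 := pow_lt_one₀ hx0.le hx1 hq0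
    have h5 : (1 - x ^ q) ^ q < u ^ q :=
      pow_lt_pow_left₀ (by linarith) (by linarith) hq0
    rw [huq] at h5
    linarith
end

section
/- Let p ≥ 3 and (u_m) satisfy u_{m+1} = 1 - u_m^{p-1} with u_0 ∈ (0, α_p), α_p the unique root of x^{p-1}+x-1=0 in [0,1]. Then the subsequence (u_{2m}) is strictly decreasing and converges to 0, and (u_{2m+1}) is strictly increasing and converges to 1. -/
/-!
Write `q = p - 1`, so that `u (m + 2) = g (u m)` for `g x = 1 - (1 - x ^ q) ^ q`. For `x > 0` with
`x ^ q + x < 1` (equivalently `x < α`) we have `0 < g x < x`, so the even terms decrease inside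
`(0, α)`; their limit is a fixed point of `g` in `[0, α)`, hence `0`. The odd terms are
`1 - u (2 * m) ^ q`, so they increase to `1`.
-/

open Set Filter Finset Topology

section Orbit

variable {g : ℝ → ℝ} {a x : ℝ}

lemma iterate_mem_Ioo (hg : ∀ y ∈ Ioo 0 a, g y ∈ Ioo 0 y) (hx : x ∈ Ioo 0 a) (n : ℕ) :
    g^[n] x ∈ Ioo 0 a := by
  induction n with
  | zero => exact hx
  | succ n ih =>
    rw [Function.iterate_succ_apply']
    exact ⟨(hg _ ih).1, (hg _ ih).2.trans ih.2⟩

lemma strictAnti_iterate (hg : ∀ y ∈ Ioo 0 a, g y ∈ Ioo 0 y) (hx : x ∈ Ioo 0 a) :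
    StrictAnti fun n => g^[n] x :=
  strictAnti_nat_of_succ_lt fun n => by
    rw [Function.iterate_succ_apply']
    exact (hg _ (iterate_mem_Ioo hg hx n)).2

/-- The limit of the orbit is a fixed point of `g` in `[0, a)`, and `g` has none but `0` there. -/
lemma tendsto_iterate_nhds_zero (hg : ∀ y ∈ Ioo 0 a, g y ∈ Ioo 0 y) (hgc : Continuous g)
    (hx : x ∈ Ioo 0 a) : Tendsto (fun n => g^[n] x) atTop (𝓝 0) := by
  have hbdd : BddBelow (range fun n => g^[n] x) :=
    ⟨0, by rintro _ ⟨n, rfl⟩; exact (iterate_mem_Ioo hg hx n).1.le⟩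
  have hlim := tendsto_atTop_ciInf (strictAnti_iterate hg hx).antitone hbdd
  set L := ⨅ n, g^[n] x
  have hfix : g L = L := isFixedPt_of_tendsto_iterate hlim hgc.continuousAt
  have hL0 : 0 ≤ L := le_ciInf fun n => (iterate_mem_Ioo hg hx n).1.le
  have hLa : L < a := (ciInf_le hbdd 0).trans_lt hx.2
  obtain hL | hL := hL0.eq_or_lt
  · rwa [← hL] at hlim
  · exact absurd hfix (hg L ⟨hL, hLa⟩).2.ne

end Orbit

/-- With `y = 1 - x ^ q` and `z = 1 - y ^ q`, the geometric-sum identities give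
`(x - z) * x ^ q = (∑ xⁱ y^(q-1-i) - y^(q-1) ∑ xⁱ) * (y - x) * (1 - x)`, and every factor on the
right is positive. -/
lemma one_sub_one_sub_pow_pow_lt {q : ℕ} (hq : 2 ≤ q) {x : ℝ} (hx : 0 < x)
    (hxq : x ^ q + x < 1) : 1 - (1 - x ^ q) ^ q < x := by
  set y := 1 - x ^ q
  have hxq0 : 0 < x ^ q := pow_pos hx q
  have hxy : x < y := by linarith
  have hy1 : y < 1 := by linarith
  have hx1 : x < 1 := by linarith
  have hA := geom_sum₂_mul x y q
  have hB := geom_sum_mul x q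
  have hyq : y ^ (q - 1) * y = y ^ q := by rw [← pow_succ, Nat.sub_add_cancel (by omega)]
  have hAB : ∑ i ∈ range q, y ^ (q - 1) * x ^ i < ∑ i ∈ range q, x ^ i * y ^ (q - 1 - i) := by
    apply sum_lt_sum
    · intro i hi
      rw [mul_comm (y ^ (q - 1))]
      exact mul_le_mul_of_nonneg_left
        (pow_le_pow_of_le_one (hx.trans hxy).le hy1.le (Nat.sub_le _ _)) (pow_nonneg hx.le i)
    · refine ⟨q - 1, mem_range.2 (by omega), ?_⟩
      rw [Nat.sub_self, pow_zero, mul_one]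
      exact mul_lt_of_lt_one_left (pow_pos hx _) (pow_lt_one₀ (hx.trans hxy).le hy1 (by omega))
  rw [← mul_sum] at hAB
  have hkey : (x - (1 - y ^ q)) * x ^ q = (∑ i ∈ range q, x ^ i * y ^ (q - 1 - i)
      - y ^ (q - 1) * ∑ i ∈ range q, x ^ i) * ((y - x) * (1 - x)) := by
    linear_combination (1 - x) * hA - (y ^ (q - 1) * (y - x)) * hB + (y - x) * hyq
  have hpos : 0 < (x - (1 - y ^ q)) * x ^ q := by
    rw [hkey]
    exact mul_pos (sub_pos.2 hAB) (mul_pos (sub_pos.2 hxy) (sub_pos.2 hx1))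
  linarith [pos_of_mul_pos_left hpos hxq0.le]

lemma one_sub_one_sub_pow_pow_mem_Ioo {q : ℕ} (hq : 2 ≤ q) {x : ℝ} (hx : 0 < x)
    (hxq : x ^ q + x < 1) : 1 - (1 - x ^ q) ^ q ∈ Ioo 0 x := by
  have hxq0 : 0 < x ^ q := pow_pos hx q
  refine ⟨sub_pos.2 (pow_lt_one₀ (by linarith) (by linarith) (by omega)), ?_⟩
  exact one_sub_one_sub_pow_pow_lt hq hx hxq

theorem stmt_8_general (p : ℕ) (hp : 3 ≤ p) (α : ℝ)
    (hroot : α ^ (p - 1) + α - 1 = 0) (u : ℕ → ℝ) (h0 : u 0 ∈ Set.Ioo 0 α)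
    (hrec : ∀ m, u (m + 1) = 1 - u m ^ (p - 1)) :
    StrictAnti (fun m => u (2 * m)) ∧
    Filter.Tendsto (fun m => u (2 * m)) Filter.atTop (nhds 0) ∧
    StrictMono (fun m => u (2 * m + 1)) ∧
    Filter.Tendsto (fun m => u (2 * m + 1)) Filter.atTop (nhds 1) := by
  set q := p - 1
  have hq : 2 ≤ q := by omega
  set g : ℝ → ℝ := fun x => 1 - (1 - x ^ q) ^ q
  have hg : ∀ x ∈ Ioo 0 α, g x ∈ Ioo 0 x := by
    rintro x ⟨hx0, hxα⟩
    have : x ^ q < α ^ q := pow_lt_pow_left₀ hxα hx0.le (by omega)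
    exact one_sub_one_sub_pow_pow_mem_Ioo hq hx0 (by linarith)
  have heven : (fun m => u (2 * m)) = fun m => g^[m] (u 0) := by
    funext m
    induction m with
    | zero => rfl
    | succ m ih => rw [Function.iterate_succ_apply', ← ih, mul_add_one, hrec, hrec]
  have hodd : (fun m => u (2 * m + 1)) = fun m => 1 - u (2 * m) ^ q := funext fun m => hrec _
  have hanti : StrictAnti fun m => u (2 * m) := heven ▸ strictAnti_iterate hg h0
  have hpos (m : ℕ) : 0 < u (2 * m) := congrFun heven m ▸ (iterate_mem_Ioo hg h0 m).1
  have hlim : Tendsto (fun m => u (2 * m)) atTop (𝓝 0) :=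
    heven ▸ tendsto_iterate_nhds_zero hg (by fun_prop) h0
  refine ⟨hanti, hlim, ?_, ?_⟩
  · rw [hodd]
    intro m n hmn
    have := pow_lt_pow_left₀ (hanti hmn) (hpos n).le (by omega : q ≠ 0)
    dsimp only
    linarith
  · rw [hodd]
    simpa [zero_pow (by omega : q ≠ 0)] using tendsto_const_nhds.sub (hlim.pow q)

theorem stmt_8 (p : ℕ) (hp : 3 ≤ p) (α : ℝ) (hα : α ∈ Set.Ioo (0:ℝ) 1)
    (hroot : α ^ (p - 1) + α - 1 = 0) (u : ℕ → ℝ) (h0 : u 0 ∈ Set.Ioo 0 α)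
    (hrec : ∀ m, u (m + 1) = 1 - u m ^ (p - 1)) :
    StrictAnti (fun m => u (2 * m)) ∧
    Filter.Tendsto (fun m => u (2 * m)) Filter.atTop (nhds 0) ∧
    StrictMono (fun m => u (2 * m + 1)) ∧
    Filter.Tendsto (fun m => u (2 * m + 1)) Filter.atTop (nhds 1) :=
  stmt_8_general p hp α hroot u h0 hrec
end

section
/- The solutions (a,b,c) ∈ [0,1]^3 of the system a = 1 - bc, b = 1 - ac, c = 1 - ab are exactly (1,1,0), (0,1,1), (1,0,1), and (α,α,α) where α = (√5-1)/2. -/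
theorem stmt_10 (a b c : ℝ) (ha : a ∈ Set.Icc (0:ℝ) 1) (hb : b ∈ Set.Icc (0:ℝ) 1)
    (hc : c ∈ Set.Icc (0:ℝ) 1) :
    (a = 1 - b * c ∧ b = 1 - a * c ∧ c = 1 - a * b) ↔
      ((a, b, c) = (1, 1, 0) ∨ (a, b, c) = (0, 1, 1) ∨ (a, b, c) = (1, 0, 1) ∨
        (a, b, c) = ((Real.sqrt 5 - 1) / 2, (Real.sqrt 5 - 1) / 2, (Real.sqrt 5 - 1) / 2)) := by
  have hs : Real.sqrt 5 ^ 2 = 5 := Real.sq_sqrt (by norm_num)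
  have hspos : Real.sqrt 5 ≥ 0 := Real.sqrt_nonneg 5
  obtain ⟨ha0, ha1⟩ := ha
  obtain ⟨hb0, hb1⟩ := hb
  obtain ⟨hc0, hc1⟩ := hc
  constructor
  · rintro ⟨h1, h2, h3⟩
    have e1 : (a - b) * (1 - c) = 0 := by nlinarith
    have e2 : (b - c) * (1 - a) = 0 := by nlinarith
    rcases mul_eq_zero.1 e1 with hab | hc1'
    · have hab : a = b := by linarith [sub_eq_zero.1 hab]
      rcases mul_eq_zero.1 e2 with hbc | ha1'
      · have hbc : b = c := by linarith [sub_eq_zero.1 hbc]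
        right; right; right
        have key : a = (Real.sqrt 5 - 1) / 2 := by
          have hq : a ^ 2 + a - 1 = 0 := by nlinarith
          have : (a - (Real.sqrt 5 - 1) / 2) * (a + (Real.sqrt 5 - 1) / 2 + 1) = 0 := by
            nlinarith
          rcases mul_eq_zero.1 this with h | h
          · linarith
          · nlinarith
        simp [Prod.ext_iff, key, hab ▸ key, hbc ▸ hab ▸ key]
      · have ha' : a = 1 := by linarith [sub_eq_zero.1 ha1']
        left
        have hb' : b = 1 := hab ▸ ha'
        have hc' : c = 0 := by rw [h3, ha', hb']; ring
        simp [Prod.ext_iff, ha', hb', hc']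
    · have hc' : c = 1 := by linarith [sub_eq_zero.1 hc1']
      have hab0 : a * b = 0 := by nlinarith
      rcases mul_eq_zero.1 hab0 with ha' | hb'
      · right; left
        have hb' : b = 1 := by rw [h2, ha']; ring
        simp [Prod.ext_iff, ha', hb', hc']
      · right; right; left
        have ha'' : a = 1 := by rw [h1, hb']; ring
        simp [Prod.ext_iff, ha'', hb', hc']
  · rintro (h | h | h | h) <;>
      (obtain ⟨ha', hb', hc'⟩ := Prod.mk.injEq .. ▸ Prod.ext_iff.1 h; simp at ha' hb' hc' ⊢) <;>
      subst ha' <;> subst hb' <;> subst hc' <;> refine ⟨by nlinarith, by nlinarith, by nlinarith⟩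
end

section
/- The only solution (a,b,c) ∈ (0,1)^3 of the system a = 1 - bc, b = 1 - ac, c = 1 - ab is a = b = c = (√5-1)/2. -/
theorem stmt_11 (a b c : ℝ) (ha : a ∈ Set.Ioo (0:ℝ) 1) (hb : b ∈ Set.Ioo (0:ℝ) 1)
    (hc : c ∈ Set.Ioo (0:ℝ) 1) :
    (a = 1 - b * c ∧ b = 1 - a * c ∧ c = 1 - a * b) ↔
      (a = (Real.sqrt 5 - 1) / 2 ∧ b = (Real.sqrt 5 - 1) / 2 ∧ c = (Real.sqrt 5 - 1) / 2) := by
  obtain ⟨ha0, ha1⟩ := ha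
  obtain ⟨hb0, hb1⟩ := hb
  obtain ⟨hc0, hc1⟩ := hc
  have h5 : Real.sqrt 5 ^ 2 = 5 := Real.sq_sqrt (by norm_num)
  have h5pos : Real.sqrt 5 > 0 := Real.sqrt_pos.mpr (by norm_num)
  constructor
  · rintro ⟨h1, h2, h3⟩
    have hab : a = b := by
      have : (a - b) * (1 - c) = 0 := by nlinarith
      rcases mul_eq_zero.mp this with h | h
      · linarith
      · linarith
    have hbc : b = c := by
      have : (b - c) * (1 - a) = 0 := by nlinarith
      rcases mul_eq_zero.mp this with h | h
      · linarith
      · linarith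
    have ha2 : a ^ 2 + a - 1 = 0 := by nlinarith
    have key : a = (Real.sqrt 5 - 1) / 2 := by
      have : (a - (Real.sqrt 5 - 1) / 2) * (a - (-Real.sqrt 5 - 1) / 2) = 0 := by nlinarith
      rcases mul_eq_zero.mp this with h | h
      · linarith
      · nlinarith
    exact ⟨key, hab ▸ key, hbc ▸ hab ▸ key⟩
  · rintro ⟨h1, h2, h3⟩
    subst h1 h2 h3
    refine ⟨?_, ?_, ?_⟩ <;> nlinarith
end

section
/- Under the recurrences u_{m+1} = 1 - v_m w_m, v_{m+1} = 1 - u_m w_m, w_{m+1} = 1 - u_m v_m with 0 < u_0 ≤ v_0 ≤ w_0 < 1, one has u_m v_{m+2} - v_m u_{m+2} = u_m v_m (u_m - v_m) ≤ 0 for all m, and consequently the sequence (v_{2q}/u_{2q}) is nonincreasing and bounded below by 1, hence convergent. -/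
theorem stmt_14 (u v w : ℕ → ℝ)
    (h0 : 0 < u 0 ∧ u 0 ≤ v 0 ∧ v 0 ≤ w 0 ∧ w 0 < 1)
    (hu : ∀ m, u (m + 1) = 1 - v m * w m)
    (hv : ∀ m, v (m + 1) = 1 - u m * w m)
    (hw : ∀ m, w (m + 1) = 1 - u m * v m) :
    (∀ m, u m * v (m + 2) - v m * u (m + 2) = u m * v m * (u m - v m) ∧
      u m * v (m + 2) - v m * u (m + 2) ≤ 0) ∧
    (∀ q, 1 ≤ v (2 * q) / u (2 * q)) ∧
    (∀ q, v (2 * (q + 1)) / u (2 * (q + 1)) ≤ v (2 * q) / u (2 * q)) ∧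
    ∃ L : ℝ, Filter.Tendsto (fun q => v (2 * q) / u (2 * q)) Filter.atTop (nhds L) := by
  have inv : ∀ m, 0 < u m ∧ u m ≤ v m ∧ v m ≤ w m ∧ w m < 1 := by
    intro m
    induction m with
    | zero => exact h0
    | succ n ih =>
      obtain ⟨h1, h2, h3, h4⟩ := ih
      rw [hu n, hv n, hw n]
      refine ⟨by nlinarith, by nlinarith, by nlinarith, by nlinarith⟩
  have key : ∀ m, u m * v (m + 2) - v m * u (m + 2) = u m * v m * (u m - v m) := by
    intro m
    rw [show m + 2 = (m + 1) + 1 from rfl, hu (m + 1), hv (m + 1), hu m, hv m, hw m]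
    ring
  have key2 : ∀ m, u m * v (m + 2) - v m * u (m + 2) ≤ 0 := by
    intro m
    rw [key m]
    obtain ⟨h1, h2, h3, h4⟩ := inv m
    nlinarith [mul_pos h1 (lt_of_lt_of_le h1 h2)]
  have hlb : ∀ q, 1 ≤ v (2 * q) / u (2 * q) := by
    intro q
    obtain ⟨h1, h2, h3, h4⟩ := inv (2 * q)
    exact (one_le_div h1).2 h2
  have hmono : ∀ q, v (2 * (q + 1)) / u (2 * (q + 1)) ≤ v (2 * q) / u (2 * q) := by
    intro q
    obtain ⟨h1, h2, h3, h4⟩ := inv (2 * q)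
    obtain ⟨h1', h2', h3', h4'⟩ := inv (2 * (q + 1))
    rw [div_le_div_iff₀ h1' h1]
    have := key2 (2 * q)
    have he : 2 * (q + 1) = 2 * q + 2 := by ring
    rw [he]
    nlinarith [key2 (2 * q)]
  refine ⟨fun m => ⟨key m, key2 m⟩, hlb, hmono, ?_⟩
  have hanti : Antitone (fun q => v (2 * q) / u (2 * q)) := by
    apply antitone_nat_of_succ_le
    intro n
    exact hmono n
  have hbdd : BddBelow (Set.range fun q => v (2 * q) / u (2 * q)) := by
    refine ⟨1, ?_⟩
    rintro x ⟨q, rfl⟩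
    exact hlb q
  exact ⟨_, tendsto_atTop_ciInf hanti hbdd⟩
end

section
/- Under the recurrences u_{m+1} = 1 - v_m w_m, v_{m+1} = 1 - u_m w_m, w_{m+1} = 1 - u_m v_m with 0 < u_0 ≤ v_0 ≤ w_0 < 1, the ratios w_m/u_m, w_m/v_m, and v_m/u_m all converge to 1 as m → ∞. -/
theorem stmt_16 (u v w : ℕ → ℝ)
    (h0 : 0 < u 0 ∧ u 0 ≤ v 0 ∧ v 0 ≤ w 0 ∧ w 0 < 1)
    (hu : ∀ m, u (m + 1) = 1 - v m * w m)
    (hv : ∀ m, v (m + 1) = 1 - u m * w m)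
    (hw : ∀ m, w (m + 1) = 1 - u m * v m) :
    Filter.Tendsto (fun m => w m / u m) Filter.atTop (nhds 1) ∧
    Filter.Tendsto (fun m => w m / v m) Filter.atTop (nhds 1) ∧
    Filter.Tendsto (fun m => v m / u m) Filter.atTop (nhds 1) := by
  -- Invariant: 0 < u m ≤ v m ≤ w m < 1 for all m
  have inv : ∀ m, 0 < u m ∧ u m ≤ v m ∧ v m ≤ w m ∧ w m < 1 := by
    intro m
    induction m with
    | zero => exact h0
    | succ m ih =>
      obtain ⟨h1, h2, h3, h4⟩ := ih
      rw [hu, hv, hw]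
      refine ⟨?_, ?_, ?_, ?_⟩ <;> nlinarith
  set s : ℕ → ℝ := fun m => w m / u m - 1 with hs
  have hsnn : ∀ m, 0 ≤ s m := by
    intro m
    obtain ⟨h1, h2, h3, h4⟩ := inv m
    have : (1 : ℝ) ≤ w m / u m := (one_le_div h1).2 (h2.trans h3)
    simp [hs]; linarith
  -- two-step contraction
  have key : ∀ m, s (m + 2) ≤ s m / 2 := by
    intro m
    obtain ⟨h1, h2, h3, h4⟩ := inv m
    obtain ⟨h1', h2', h3', h4'⟩ := inv (m + 2)
    have e1 : u (m + 2) = 1 - (1 - u m * w m) * (1 - u m * v m) := by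
      rw [hu, hv, hw]
    have e2 : w (m + 2) = 1 - (1 - v m * w m) * (1 - u m * w m) := by
      rw [hw, hu, hv]
    simp only [hs]
    rw [div_sub_one (ne_of_gt h1'), div_sub_one (ne_of_gt h1), div_div,
      div_le_div_iff₀ h1' (by positivity)]
    rw [e1, e2]
    have hkey : 0 ≤ u m * (w m - u m) * (w m - v m + u m * v m * w m) :=
      mul_nonneg (mul_nonneg h1.le (by linarith))
        (by nlinarith [mul_pos (mul_pos h1 (h1.trans_le h2)) (h1.trans_le (h2.trans h3))])
    nlinarith [hkey]
  -- geometric bound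
  set M : ℝ := max (s 0) (s 1) with hM
  have hbound : ∀ m, s m ≤ M * (1 / 2 : ℝ) ^ (m / 2) := by
    intro m
    induction m using Nat.strong_induction_on with
    | _ m ih =>
      match m with
      | 0 =>
        have : s 0 ≤ M := le_of_le_of_eq (le_max_left (s 0) (s 1)) hM.symm
        simpa using this
      | 1 =>
        have : s 1 ≤ M := le_of_le_of_eq (le_max_right (s 0) (s 1)) hM.symm
        simpa using this
      | (k + 2) =>
        have h1 := key k
        have h2 := ih k (by omega)
        have h3 : (k + 2) / 2 = k / 2 + 1 := by omega
        calc s (k + 2) ≤ s k / 2 := h1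
          _ ≤ M * (1 / 2 : ℝ) ^ (k / 2) / 2 := by linarith
          _ = M * (1 / 2 : ℝ) ^ (k / 2 + 1) := by ring
          _ = M * (1 / 2 : ℝ) ^ ((k + 2) / 2) := by rw [h3]
  have hdiv : Filter.Tendsto (fun m : ℕ => m / 2) Filter.atTop Filter.atTop :=
    Filter.tendsto_atTop_atTop.mpr (fun b => ⟨2 * b, fun a ha => by omega⟩)
  have hgeo : Filter.Tendsto (fun m : ℕ => M * (1 / 2 : ℝ) ^ (m / 2))
      Filter.atTop (nhds 0) := by
    have h := (tendsto_pow_atTop_nhds_zero_of_lt_one (by norm_num : (0:ℝ) ≤ 1/2)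
      (by norm_num : (1/2:ℝ) < 1)).comp hdiv
    have := h.const_mul M
    simpa using this
  have hszero : Filter.Tendsto s Filter.atTop (nhds 0) :=
    squeeze_zero hsnn hbound hgeo
  have hwu : Filter.Tendsto (fun m => w m / u m) Filter.atTop (nhds 1) := by
    have := hszero.add (tendsto_const_nhds (x := (1:ℝ)))
    simp only [hs] at this
    simpa using this
  refine ⟨hwu, ?_, ?_⟩
  · -- w/v between 1 and w/u
    refine tendsto_of_tendsto_of_tendsto_of_le_of_le tendsto_const_nhds hwu ?_ ?_
    · intro m
      obtain ⟨h1, h2, h3, h4⟩ := inv m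
      exact (one_le_div (h1.trans_le h2)).2 h3
    · intro m
      obtain ⟨h1, h2, h3, h4⟩ := inv m
      exact div_le_div_of_nonneg_left (by linarith) h1 h2
  · refine tendsto_of_tendsto_of_tendsto_of_le_of_le tendsto_const_nhds hwu ?_ ?_
    · intro m
      obtain ⟨h1, h2, h3, h4⟩ := inv m
      exact (one_le_div h1).2 h2
    · intro m
      obtain ⟨h1, h2, h3, h4⟩ := inv m
      exact (div_le_div_iff_of_pos_right h1).2 h3
end

section
/- Let α = (√5-1)/2. If (u_m), (v_m), (w_m) satisfy the recurrences u_{m+1} = 1 - v_m w_m, v_{m+1} = 1 - u_m w_m, w_{m+1} = 1 - u_m v_m and at some index m_0 all three values u_{m_0}, v_{m_0}, w_{m_0} lie in (α, 1), then for all q ≥ 0 the triple at index m_0+2q lies in (α,1)^3 and the triple at index m_0+2q+1 lies in (0,α)^3. -/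
private lemma alpha_sq : ((Real.sqrt 5 - 1) / 2) ^ 2 = 1 - (Real.sqrt 5 - 1) / 2 := by
  have h5 : Real.sqrt 5 ^ 2 = 5 := Real.sq_sqrt (by norm_num)
  nlinarith [h5]

private lemma alpha_pos : (0:ℝ) < (Real.sqrt 5 - 1) / 2 := by
  have : (1:ℝ) < Real.sqrt 5 := by
    have := Real.sq_sqrt (show (0:ℝ) ≤ 5 by norm_num)
    nlinarith [Real.sqrt_nonneg 5]
  linarith

private lemma alpha_lt_one : (Real.sqrt 5 - 1) / 2 < 1 := by
  have : Real.sqrt 5 < 3 := by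
    have := Real.sq_sqrt (show (0:ℝ) ≤ 5 by norm_num)
    nlinarith [Real.sqrt_nonneg 5]
  linarith

private lemma step1 {x y : ℝ} (hx : x ∈ Set.Ioo ((Real.sqrt 5 - 1) / 2) 1)
    (hy : y ∈ Set.Ioo ((Real.sqrt 5 - 1) / 2) 1) :
    1 - x * y ∈ Set.Ioo (0:ℝ) ((Real.sqrt 5 - 1) / 2) := by
  obtain ⟨hx1, hx2⟩ := hx
  obtain ⟨hy1, hy2⟩ := hy
  have ha := alpha_pos
  have := alpha_sq
  constructor <;> nlinarith

private lemma step2 {x y : ℝ} (hx : x ∈ Set.Ioo (0:ℝ) ((Real.sqrt 5 - 1) / 2))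
    (hy : y ∈ Set.Ioo (0:ℝ) ((Real.sqrt 5 - 1) / 2)) :
    1 - x * y ∈ Set.Ioo ((Real.sqrt 5 - 1) / 2) 1 := by
  obtain ⟨hx1, hx2⟩ := hx
  obtain ⟨hy1, hy2⟩ := hy
  have := alpha_sq
  constructor <;> nlinarith

theorem stmt_17 (u v w : ℕ → ℝ)
    (hu : ∀ m, u (m + 1) = 1 - v m * w m)
    (hv : ∀ m, v (m + 1) = 1 - u m * w m)
    (hw : ∀ m, w (m + 1) = 1 - u m * v m)
    (m₀ : ℕ)
    (h : u m₀ ∈ Set.Ioo ((Real.sqrt 5 - 1) / 2) 1 ∧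
         v m₀ ∈ Set.Ioo ((Real.sqrt 5 - 1) / 2) 1 ∧
         w m₀ ∈ Set.Ioo ((Real.sqrt 5 - 1) / 2) 1) :
    ∀ q : ℕ,
      (u (m₀ + 2 * q) ∈ Set.Ioo ((Real.sqrt 5 - 1) / 2) 1 ∧
       v (m₀ + 2 * q) ∈ Set.Ioo ((Real.sqrt 5 - 1) / 2) 1 ∧
       w (m₀ + 2 * q) ∈ Set.Ioo ((Real.sqrt 5 - 1) / 2) 1) ∧
      (u (m₀ + 2 * q + 1) ∈ Set.Ioo (0:ℝ) ((Real.sqrt 5 - 1) / 2) ∧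
       v (m₀ + 2 * q + 1) ∈ Set.Ioo (0:ℝ) ((Real.sqrt 5 - 1) / 2) ∧
       w (m₀ + 2 * q + 1) ∈ Set.Ioo (0:ℝ) ((Real.sqrt 5 - 1) / 2)) := by
  intro q
  induction q with
  | zero =>
    obtain ⟨hu0, hv0, hw0⟩ := h
    simp only [Nat.mul_zero, Nat.add_zero] at *
    refine ⟨⟨hu0, hv0, hw0⟩, ?_⟩
    rw [hu m₀, hv m₀, hw m₀]
    exact ⟨step1 hv0 hw0, step1 hu0 hw0, step1 hu0 hv0⟩
  | succ n ih =>
    obtain ⟨_, hu1, hv1, hw1⟩ := ih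
    have heq : m₀ + 2 * (n + 1) = (m₀ + 2 * n + 1) + 1 := by ring
    have hA : u (m₀ + 2 * (n + 1)) ∈ Set.Ioo ((Real.sqrt 5 - 1) / 2) 1 := by
      rw [heq, hu]; exact step2 hv1 hw1
    have hB : v (m₀ + 2 * (n + 1)) ∈ Set.Ioo ((Real.sqrt 5 - 1) / 2) 1 := by
      rw [heq, hv]; exact step2 hu1 hw1
    have hC : w (m₀ + 2 * (n + 1)) ∈ Set.Ioo ((Real.sqrt 5 - 1) / 2) 1 := by
      rw [heq, hw]; exact step2 hu1 hv1
    refine ⟨⟨hA, hB, hC⟩, ?_⟩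
    rw [hu, hv, hw]
    exact ⟨step1 hB hC, step1 hA hC, step1 hA hB⟩
end

section
/- Let (u_m), (v_m), (w_m) satisfy u_{m+1} = 1 - v_m w_m, v_{m+1} = 1 - u_m w_m, w_{m+1} = 1 - u_m v_m with 0 < u_{m_0} ≤ v_{m_0} ≤ w_{m_0} < α at some index m_0, where α = (√5-1)/2. Then u_{m_0+2q}, v_{m_0+2q}, w_{m_0+2q} all converge to 0 as q → ∞, and u_{m_0+2q+1}, v_{m_0+2q+1}, w_{m_0+2q+1} all converge to 1. -/
private lemma aux_step (t₀ t a b : ℝ) (ht : 0 < t) (htt0 : t ≤ t₀) (ht01 : t₀ < 1)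
    (hsum : t₀ ^ 2 + t₀ < 1)
    (ha : 1 - t ^ 2 ≤ a) (ha1 : a < 1) (hb : 1 - t ^ 2 ≤ b) (hb1 : b < 1) :
    0 < 1 - a * b ∧ 1 - a * b ≤ t * (t₀ * (2 - t₀ ^ 2)) := by
  have ht1 : t < 1 := lt_of_le_of_lt htt0 ht01
  have ha0 : 0 < a := lt_of_lt_of_le (by nlinarith) ha
  have hb0 : 0 < b := lt_of_lt_of_le (by nlinarith) hb
  have ht0' : 0 < t₀ := lt_of_lt_of_le ht htt0
  have h3 : 3 * t₀ ^ 2 < 2 := by nlinarith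
  have hmono : t * (2 - t ^ 2) ≤ t₀ * (2 - t₀ ^ 2) := by
    nlinarith [mul_nonneg (sub_nonneg.2 htt0)
      (by nlinarith : (0:ℝ) ≤ 2 - t₀ ^ 2 - t₀ * t - t ^ 2)]
  have hab : (1 - t ^ 2) * (1 - t ^ 2) ≤ a * b :=
    mul_le_mul ha hb (by nlinarith) ha0.le
  constructor
  · nlinarith [mul_lt_mul_of_pos_left hb1 ha0]
  · nlinarith [mul_le_mul_of_nonneg_left hmono ht.le]

theorem stmt_19 (u v w : ℕ → ℝ)
    (hu : ∀ m, u (m + 1) = 1 - v m * w m)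
    (hv : ∀ m, v (m + 1) = 1 - u m * w m)
    (hw : ∀ m, w (m + 1) = 1 - u m * v m)
    (m₀ : ℕ)
    (h : 0 < u m₀ ∧ u m₀ ≤ v m₀ ∧ v m₀ ≤ w m₀ ∧ w m₀ < (Real.sqrt 5 - 1) / 2) :
    Filter.Tendsto (fun q => u (m₀ + 2 * q)) Filter.atTop (nhds 0) ∧
    Filter.Tendsto (fun q => v (m₀ + 2 * q)) Filter.atTop (nhds 0) ∧
    Filter.Tendsto (fun q => w (m₀ + 2 * q)) Filter.atTop (nhds 0) ∧
    Filter.Tendsto (fun q => u (m₀ + 2 * q + 1)) Filter.atTop (nhds 1) ∧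
    Filter.Tendsto (fun q => v (m₀ + 2 * q + 1)) Filter.atTop (nhds 1) ∧
    Filter.Tendsto (fun q => w (m₀ + 2 * q + 1)) Filter.atTop (nhds 1) := by
  obtain ⟨hu0, huv, hvw, hwα⟩ := h
  set t₀ := w m₀ with ht₀def
  have ht0pos : 0 < t₀ := lt_of_lt_of_le hu0 (huv.trans hvw)
  have hs5 : Real.sqrt 5 < 3 := by
    nlinarith [Real.sq_sqrt (by norm_num : (0:ℝ) ≤ 5), Real.sqrt_nonneg 5]
  have ht01 : t₀ < 1 := by nlinarith
  have hsum : t₀ ^ 2 + t₀ < 1 := by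
    nlinarith [Real.sq_sqrt (by norm_num : (0:ℝ) ≤ 5), Real.sqrt_nonneg 5,
      sq_nonneg (2 * t₀ + 1 - Real.sqrt 5)]
  set c := t₀ * (2 - t₀ ^ 2) with hcdef
  have hcpos : 0 < c := by nlinarith
  have hc1 : c < 1 := by
    nlinarith [mul_pos (by nlinarith : (0:ℝ) < 1 - t₀) (by nlinarith : (0:ℝ) < 1 - t₀ - t₀ ^ 2)]
  -- invariant at even steps
  have key : ∀ q,
      (0 < u (m₀ + 2 * q) ∧ u (m₀ + 2 * q) ≤ t₀ * c ^ q) ∧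
      (0 < v (m₀ + 2 * q) ∧ v (m₀ + 2 * q) ≤ t₀ * c ^ q) ∧
      (0 < w (m₀ + 2 * q) ∧ w (m₀ + 2 * q) ≤ t₀ * c ^ q) := by
    intro q
    induction q with
    | zero =>
      simp only [Nat.mul_zero, Nat.add_zero, pow_zero, mul_one]
      exact ⟨⟨hu0, (huv.trans hvw)⟩, ⟨lt_of_lt_of_le hu0 huv, hvw⟩,
        ⟨lt_of_lt_of_le hu0 (huv.trans hvw), le_refl _⟩⟩
    | succ q ih =>
      obtain ⟨⟨hu1, hu2⟩, ⟨hv1, hv2⟩, ⟨hw1, hw2⟩⟩ := ih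
      set M := m₀ + 2 * q with hMdef
      set t := t₀ * c ^ q with htdef
      have htpos : 0 < t := mul_pos ht0pos (pow_pos hcpos q)
      have htt0 : t ≤ t₀ := by
        calc t ≤ t₀ * 1 := by
              apply mul_le_mul_of_nonneg_left _ ht0pos.le
              exact pow_le_one₀ hcpos.le hc1.le
          _ = t₀ := mul_one _
      have ht1 : t < 1 := lt_of_le_of_lt htt0 ht01
      -- step to M+1 : each value in [1 - t^2, 1)
      have prodb : ∀ x y : ℝ, 0 < x → x ≤ t → 0 < y → y ≤ t →
          1 - t ^ 2 ≤ 1 - x * y ∧ 1 - x * y < 1 := by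
        intro x y hx hxt hy hyt
        constructor
        · nlinarith [mul_le_mul hxt hyt hy.le htpos.le]
        · nlinarith [mul_pos hx hy]
      have hUm : 1 - t ^ 2 ≤ u (M + 1) ∧ u (M + 1) < 1 := by
        rw [hu M]; exact prodb _ _ hv1 hv2 hw1 hw2
      have hVm : 1 - t ^ 2 ≤ v (M + 1) ∧ v (M + 1) < 1 := by
        rw [hv M]; exact prodb _ _ hu1 hu2 hw1 hw2
      have hWm : 1 - t ^ 2 ≤ w (M + 1) ∧ w (M + 1) < 1 := by
        rw [hw M]; exact prodb _ _ hu1 hu2 hv1 hv2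
      have hidx : m₀ + 2 * (q + 1) = M + 1 + 1 := by omega
      have htc : t * c = t₀ * c ^ (q + 1) := by rw [htdef, pow_succ]; ring
      rw [hidx]
      refine ⟨?_, ?_, ?_⟩
      · rw [hu (M + 1), ← htc]
        exact aux_step t₀ t _ _ htpos htt0 ht01 hsum hVm.1 hVm.2 hWm.1 hWm.2
      · rw [hv (M + 1), ← htc]
        exact aux_step t₀ t _ _ htpos htt0 ht01 hsum hUm.1 hUm.2 hWm.1 hWm.2
      · rw [hw (M + 1), ← htc]
        exact aux_step t₀ t _ _ htpos htt0 ht01 hsum hUm.1 hUm.2 hVm.1 hVm.2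
  have hgeo : Filter.Tendsto (fun q : ℕ => t₀ * c ^ q) Filter.atTop (nhds 0) := by
    have := (tendsto_pow_atTop_nhds_zero_of_lt_one hcpos.le hc1).const_mul t₀
    simpa using this
  have tu : Filter.Tendsto (fun q => u (m₀ + 2 * q)) Filter.atTop (nhds 0) :=
    squeeze_zero (fun q => (key q).1.1.le) (fun q => (key q).1.2) hgeo
  have tv : Filter.Tendsto (fun q => v (m₀ + 2 * q)) Filter.atTop (nhds 0) :=
    squeeze_zero (fun q => (key q).2.1.1.le) (fun q => (key q).2.1.2) hgeo
  have tw : Filter.Tendsto (fun q => w (m₀ + 2 * q)) Filter.atTop (nhds 0) :=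
    squeeze_zero (fun q => (key q).2.2.1.le) (fun q => (key q).2.2.2) hgeo
  refine ⟨tu, tv, tw, ?_, ?_, ?_⟩
  · have : Filter.Tendsto (fun q => 1 - v (m₀ + 2 * q) * w (m₀ + 2 * q))
        Filter.atTop (nhds (1 - 0 * 0)) := tendsto_const_nhds.sub (tv.mul tw)
    simpa [hu] using this
  · have : Filter.Tendsto (fun q => 1 - u (m₀ + 2 * q) * w (m₀ + 2 * q))
        Filter.atTop (nhds (1 - 0 * 0)) := tendsto_const_nhds.sub (tu.mul tw)
    simpa [hv] using this
  · have : Filter.Tendsto (fun q => 1 - u (m₀ + 2 * q) * v (m₀ + 2 * q))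
        Filter.atTop (nhds (1 - 0 * 0)) := tendsto_const_nhds.sub (tu.mul tv)
    simpa [hw] using this
end
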